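/- Let D be a strongly connected digraph containing no subdivision of B(k,1;1) (k ≥ 3), and let C be a directed cycle in D of length at least 2k-2. Then the subdigraph of D induced by the vertices of C has maximum degree at most 2k-2 in its underlying graph, and hence chromatic number at most 2k-2. -/

import Mathlib

universe u

section Defs
variable {V : Type u}

/-- `l` is a directed path from `x` to `y` in the digraph with arc relation `A`. -/
def DiPath (A : V → V → Prop) (x y : V) (l : List V) : Prop :=
  l.Chain' A ∧ l.Nodup ∧ l.head? = some x ∧ l.getLast? = some y

/-- The internal vertices of a path given as a list. -/
def internals (l : List V) : List V := l.tail.dropLast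

/-- `(a,b)` is an arc of the directed cycle represented by the list `l`. -/
def cycArc (l : List V) (a b : V) : Prop :=
  (a, b) ∈ l.zip l.tail ∨ (l.getLast? = some a ∧ l.head? = some b)

/-- `l` represents a directed cycle of the digraph with arc relation `A`;
its length (number of arcs = number of vertices) is `l.length`. -/
def DiCycle (A : V → V → Prop) (l : List V) : Prop :=
  l ≠ [] ∧ l.Chain' A ∧ l.Nodup ∧
    ∀ a b, l.getLast? = some a → l.head? = some b → A a b

/-- A digraph is strongly connected. -/
def StrongConn (A : V → V → Prop) : Prop := ∀ x y : V, ∃ l, DiPath A x y l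

/-- The chromatic number of a digraph: that of its underlying undirected graph. -/
noncomputable def dchrom (A : V → V → Prop) : ℕ∞ :=
  (SimpleGraph.fromRel A).chromaticNumber

/-- Two paths are internally disjoint. -/
def IntDisj (P Q : List V) : Prop :=
  (∀ v ∈ internals P, v ∉ internals Q) ∧ (∀ v ∈ internals Q, v ∉ internals P)

/-- `D` contains a subdivision of the bispindle `B(k1,k2;k3)`: vertices `x`, `y`
and three pairwise internally disjoint dipaths, two from `x` to `y` of lengths
at least `k1` and `k2`, and one from `y` to `x` of length at least `k3`. -/
def SubdivB (A : V → V → Prop) (k1 k2 k3 : ℕ) : Prop :=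
  ∃ (x y : V) (P1 P2 P3 : List V),
    DiPath A x y P1 ∧ DiPath A x y P2 ∧ DiPath A y x P3 ∧
    k1 + 1 ≤ P1.length ∧ k2 + 1 ≤ P2.length ∧ k3 + 1 ≤ P3.length ∧
    P1 ≠ P2 ∧ IntDisj P1 P2 ∧ IntDisj P1 P3 ∧ IntDisj P2 P3

/-- The length of the subpath of the cycle `l` from `a` to `b` (number of arcs). -/
def cycDist [DecidableEq V] (l : List V) (a b : V) : ℕ :=
  (l.rotate (l.idxOf a)).idxOf b

/-- The subpath (vertex list) of the cycle `l` from `a` to `b`. -/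
def cycSub [DecidableEq V] (l : List V) (a b : V) : List V :=
  (l.rotate (l.idxOf a)).take (cycDist l a b + 1)

/-- The intersection of the cycles `Ci` and `Cj` is the common directed subpath
from `a` to `b`, having at most `k` vertices. -/
def InterPath [DecidableEq V] (k : ℕ) (Ci Cj : List V) (a b : V) : Prop :=
  a ∈ Ci ∧ b ∈ Cj ∧ (∀ x, (x ∈ Ci ∧ x ∈ Cj) ↔ x ∈ cycSub Ci a b) ∧
  cycSub Ci a b = cycSub Cj a b ∧ (cycSub Ci a b).length ≤ k

/-- A `k`-suitable collection of directed cycles: all cycles have length at least `8k`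
and any two distinct cycles intersect on a directed subpath of at most `k` vertices. -/
def Suitable [DecidableEq V] (A : V → V → Prop) (k : ℕ) (𝒞 : Set (List V)) : Prop :=
  (∀ C ∈ 𝒞, DiCycle A C ∧ 8 * k ≤ C.length) ∧
  ∀ C ∈ 𝒞, ∀ C' ∈ 𝒞, C ≠ C' → (∃ x, x ∈ C ∧ x ∈ C') → ∃ a b, InterPath k C C' a b

/-- Adjacency in the intersection graph of a collection of cycles. -/
def interRel (𝒞 : Set (List V)) : List V → List V → Prop :=
  fun C C' => C ∈ 𝒞 ∧ C' ∈ 𝒞 ∧ ∃ x, x ∈ C ∧ x ∈ C'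

/-- `(a,b)` is an arc of the union of the cycles of `𝒞`. -/
def unionArc (𝒞 : Set (List V)) (a b : V) : Prop := ∃ C ∈ 𝒞, cycArc C a b

/-- A graph is 2-connected. -/
def TwoConnectedG {W : Type*} (G : SimpleGraph W) : Prop :=
  G.Connected ∧ ∀ w : W, (G.induce {u | u ≠ w}).Connected

end Defs

/-! A chord `C[i] → C[i + d]` of the cycle `C` with `k ≤ d < |C|` closes a subdivision of
`B(k,1;1)`: the two arcs of `C` between its ends, together with the chord, are the three paths.
So every arc between vertices of `C` jumps forward along `C` by less than `k`, and the neighbours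
of a vertex on `C` lie among the `k - 1` vertices before it and the `k - 1` vertices after it.

This replaces Brooks' theorem for the colouring. If `|C| ≥ 2k`, cut `C` into consecutive blocks
of `k` to `2k - 2` vertices and colour each vertex by its position in its block: equal colours are
then at least `k` apart in both directions around `C`. If `|C| ≤ 2k - 2` there is nothing to do.
If `|C| = 2k - 1` and the vertices of `C` were pairwise adjacent, every `C[i]` would dominate
exactly its `k - 1` successors, and `C[0], C[2], …, C[k-1], C[k+1], C[1], C[k]` would be a cycle
with the chord `C[0] → C[1]` jumping `k` steps; so two vertices of `C` are non-adjacent and may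
share a colour. -/

-- `i - f i` is the first index of the block of `i`; the third conjunct keeps the last block at
-- least `k` long, which is what the wrap-around in `exists_cyclic_coloring` needs.
lemma exists_block_coloring {k n : ℕ} (hk : 3 ≤ k) (hn : 2 * k ≤ n) : ∃ f : ℕ → ℕ, ∀ i < n,
    f i ≤ i ∧ f i < 2 * k - 2 ∧ k ≤ f i + (n - i) ∧ ∀ j < n, i < j → f i = f j → k ≤ j - i := by
  induction n using Nat.strong_induction_on with
  | _ n ih =>
    by_cases hsmall : n ≤ 4 * k - 4
    · refine ⟨fun i => if i < n / 2 then i else i - n / 2, fun i hi => ?_⟩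
      dsimp only
      refine ⟨by split_ifs <;> omega, by split_ifs <;> omega, by split_ifs <;> omega,
        fun j hj hij => ?_⟩
      split_ifs <;> omega
    · obtain ⟨g, hg⟩ := ih (n - k) (by omega) (by omega)
      refine ⟨fun i => if i < k then i else g (i - k), fun i hi => ?_⟩
      by_cases hik : i < k
      · simp only [if_pos hik]
        refine ⟨le_rfl, by omega, by omega, fun j hj hij hfij => ?_⟩
        split_ifs at hfij with hjk
        · omega
        · have := (hg (j - k) (by omega)).1
          omega
      · obtain ⟨hle, hlt, hend, hfar⟩ := hg (i - k) (by omega)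
        simp only [if_neg hik]
        refine ⟨by omega, hlt, by omega, fun j hj hij hfij => ?_⟩
        rw [if_neg (by omega)] at hfij
        have := hfar (j - k) (by omega) (by omega) hfij
        omega

lemma exists_cyclic_coloring {k n : ℕ} (hk : 3 ≤ k) (hn : n ≠ 2 * k - 1) :
    ∃ f : ℕ → ℕ, (∀ i < n, f i < 2 * k - 2) ∧
      ∀ i j, i < j → j < n → f i = f j → k ≤ j - i ∧ k ≤ n - (j - i) := by
  rcases lt_or_gt_of_ne hn with hlt | hgt
  · exact ⟨id, fun i hi => show i < 2 * k - 2 by omega, fun i j hij _ h => absurd h hij.ne⟩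
  · obtain ⟨f, hf⟩ := exists_block_coloring (n := n) hk (by omega)
    refine ⟨f, fun i hi => (hf i hi).2.1, fun i j hij hj hfij => ?_⟩
    obtain ⟨hfi, -, -, hfar⟩ := hf i (by omega)
    have hend := (hf j hj).2.2.1
    exact ⟨hfar j hj hij hfij, by omega⟩

lemma SimpleGraph.colorable_of_card_le_succ_of_not_adj {W : Type*} [Finite W]
    {G : SimpleGraph W} {m : ℕ} (hcard : Nat.card W ≤ m + 1) {a b : W} (hab : a ≠ b)
    (hnadj : ¬ G.Adj a b) : G.Colorable m := by
  classical
  have := Fintype.ofFinite W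
  let c : G.Coloring {x : W // x ≠ b} :=
    SimpleGraph.Coloring.mk (fun x => if hx : x = b then ⟨a, hab⟩ else ⟨x, hx⟩) <| by
      intro x y hxy hc
      by_cases hx : x = b <;> by_cases hy : y = b <;>
        simp only [hx, hy, dite_true, dite_false, Subtype.mk.injEq] at hc <;> subst_vars
      · exact G.irrefl hxy
      · exact hnadj hxy.symm
      · exact hnadj hxy
      · exact G.irrefl hxy
  refine c.colorable.mono ?_
  rw [Fintype.card_subtype_compl, Fintype.card_subtype_eq, ← Nat.card_eq_fintype_card]
  omega

section Digraph
variable {V : Type*} {A : V → V → Prop} {k : ℕ} {C : List V}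

lemma diCycle_iff_chain : DiCycle A C ↔ C ≠ [] ∧ Cycle.Chain A (C : Cycle V) ∧ C.Nodup := by
  cases C with
  | nil => simp [DiCycle]
  | cons a t =>
    simp only [DiCycle, Cycle.chain_coe_cons, ← List.cons_append, List.isChain_append,
      List.head?_cons, Option.mem_def, Option.some.injEq]
    exact ⟨fun ⟨hne, hchain, hnd, hwrap⟩ => ⟨hne, ⟨hchain, List.isChain_singleton a,
      fun x hx y hy => hwrap x y hx hy⟩, hnd⟩,
      fun ⟨hne, ⟨hchain, _, hwrap⟩, hnd⟩ =>
        ⟨hne, hchain, hnd, fun x y hx hy => hwrap x hx y hy⟩⟩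

lemma DiCycle.rotate (hC : DiCycle A C) (m : ℕ) : DiCycle A (C.rotate m) := by
  obtain ⟨hne, hchain, hnd⟩ := diCycle_iff_chain.1 hC
  refine diCycle_iff_chain.2 ⟨by simpa using hne, ?_, List.nodup_rotate.2 hnd⟩
  rwa [Cycle.coe_eq_coe.2 (List.IsRotated.forall C m)]

lemma internals_append_singleton {l : List V} (hl : l ≠ []) (b : V) :
    internals (l ++ [b]) = l.tail := by
  rw [internals, List.tail_append_of_ne_nil hl, List.dropLast_concat]

lemma DiCycle.subdivB_of_chord (hC : DiCycle A C) (hk : 2 ≤ k) {d : ℕ} (hkd : k ≤ d)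
    (hd : d < C.length) (hA : A C[0] C[d]) : SubdivB A k 1 1 := by
  obtain ⟨-, hchain, hnd, hwrap⟩ := hC
  have h0d : C[0] ≠ C[d] := fun h => by have := hnd.getElem_inj_iff.1 h; omega
  have htake : C.take (d + 1) = C.take d ++ [C[d]] := List.take_succ_eq_append_getElem hd
  have hdrop : C.drop d ≠ [] := by simp only [ne_eq, List.drop_eq_nil_iff]; omega
  have h0 : C[0] ∈ C.take d := List.mem_take_iff_getElem.2 ⟨0, by omega, rfl⟩
  have hP1 : DiPath A C[0] C[d] (C.take (d + 1)) :=
    ⟨hchain.take _, hnd.sublist (List.take_sublist _ _), by simp [List.head?_eq_getElem?],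
      by rw [htake, List.getLast?_concat]⟩
  have hP3 : DiPath A C[d] C[0] (C.drop d ++ [C[0]]) := by
    refine ⟨List.isChain_append.2 ⟨hchain.drop d, List.isChain_singleton _, ?_⟩,
      List.nodup_append.2 ⟨hnd.sublist (List.drop_sublist _ _), List.nodup_singleton _, ?_⟩,
      by simp [List.head?_drop, hd], by simp⟩
    · intro x hx y hy
      rw [List.getLast?_drop, if_neg (by omega)] at hx
      rw [List.head?_cons, Option.mem_some_iff] at hy
      exact hwrap x y hx (by simp [List.head?_eq_getElem?, ← hy])
    · rintro x hx y hy rfl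
      rw [List.mem_singleton] at hy
      exact List.disjoint_take_drop hnd le_rfl (hy ▸ h0) hx
  have hP1P3 : ∀ x ∈ internals (C.take (d + 1)), x ∉ internals (C.drop d ++ [C[0]]) := by
    rw [htake, internals_append_singleton (List.ne_nil_of_mem h0),
      internals_append_singleton hdrop, List.tail_drop]
    exact fun x hx => List.disjoint_take_drop hnd d.le_succ ((List.tail_sublist _).subset hx)
  have hlen : k + 1 ≤ (C.take (d + 1)).length := by simp only [List.length_take]; omega
  refine ⟨C[0], C[d], _, [C[0], C[d]], _, hP1, ⟨List.isChain_pair.2 hA, by simp [h0d], rfl, rfl⟩,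
    hP3, hlen, le_rfl,
    by simp only [List.length_append, List.length_drop, List.length_singleton]; omega,
    fun h => by simp only [h, List.length_cons, List.length_nil] at hlen; omega,
    by simp [IntDisj, internals], ⟨hP1P3, fun x h3 h1 => hP1P3 x h1 h3⟩,
    by simp [IntDisj, internals]⟩

lemma DiCycle.lt_of_arc (hC : DiCycle A C) (hfree : ¬ SubdivB A k 1 1) (hk : 2 ≤ k)
    {i j d : ℕ} (hi : i < C.length) (hj : j < C.length) (hd : d < C.length)
    (hij : (i + d) % C.length = j) (hA : A C[i] C[j]) : d < k := by
  by_contra! hkd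
  refine hfree <| (hC.rotate i).subdivB_of_chord hk hkd (by simpa using hd) ?_
  simp only [List.getElem_rotate]
  convert hA using 2
  · simp [Nat.mod_eq_of_lt hi]
  · simp [add_comm, hij]

lemma DiCycle.sub_lt_of_arc (hC : DiCycle A C) (hfree : ¬ SubdivB A k 1 1) (hk : 2 ≤ k)
    {i j : ℕ} (hij : i < j) (hj : j < C.length) (hA : A C[i] C[j]) : j - i < k :=
  hC.lt_of_arc hfree hk (by omega) hj (by omega)
    (by rw [Nat.add_sub_cancel' hij.le, Nat.mod_eq_of_lt hj]) hA

lemma DiCycle.length_sub_lt_of_arc (hC : DiCycle A C) (hfree : ¬ SubdivB A k 1 1) (hk : 2 ≤ k)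
    {i j : ℕ} (hij : i < j) (hj : j < C.length) (hA : A C[j] C[i]) : C.length - (j - i) < k :=
  hC.lt_of_arc hfree hk hj (by omega) (by omega)
    (by rw [show j + (C.length - (j - i)) = i + C.length by omega, Nat.add_mod_right,
      Nat.mod_eq_of_lt (by omega)]) hA

lemma DiCycle.dist_lt_of_adj (hC : DiCycle A C) (hfree : ¬ SubdivB A k 1 1) (hk : 2 ≤ k)
    {i j : ℕ} (hij : i < j) (hj : j < C.length) (hA : A C[i] C[j] ∨ A C[j] C[i]) :
    j - i < k ∨ C.length - (j - i) < k :=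
  hA.imp (hC.sub_lt_of_arc hfree hk hij hj) (hC.length_sub_lt_of_arc hfree hk hij hj)

lemma DiCycle.ncard_adj_le (hC : DiCycle A C) (hfree : ¬ SubdivB A k 1 1) (hk : 2 ≤ k)
    {v : V} (hv : v ∈ C) : {u | u ∈ C ∧ u ≠ v ∧ (A u v ∨ A v u)}.ncard ≤ 2 * k - 2 := by
  classical
  set R := C.rotate (C.idxOf v)
  have hR : DiCycle A R := hC.rotate _
  have hR0 : R[0]'(by simpa [R] using List.length_pos_of_mem hv) = v := by
    simp [R, List.getElem_rotate, Nat.mod_eq_of_lt (List.idxOf_lt_length_iff.2 hv)]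
  set n := R.length
  have hT : ((Finset.Icc 1 (k - 1) ∪ Finset.Ico (n + 1 - k) n : Finset ℕ) : Set ℕ).ncard ≤
      2 * k - 2 := by
    rw [Set.ncard_coe_finset]
    refine (Finset.card_union_le _ _).trans ?_
    simp only [Nat.card_Icc, Nat.card_Ico]
    omega
  refine le_trans (Set.ncard_le_ncard_of_injOn R.idxOf ?_ ?_ (Finset.finite_toSet _)) hT
  · rintro u ⟨huC, huv, harc⟩
    have hj : R.idxOf u < n := List.idxOf_lt_length_iff.2 (List.mem_rotate.2 huC)
    have hRj : R[R.idxOf u] = u := List.getElem_idxOf hj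
    have hj0 : R.idxOf u ≠ 0 := fun h => huv (by rw [← hRj, ← hR0]; simp only [h])
    have := hR.dist_lt_of_adj hfree hk (Nat.pos_of_ne_zero hj0) hj
      (by rw [hR0, hRj]; exact harc.symm)
    simp only [Finset.coe_union, Finset.coe_Icc, Finset.coe_Ico, Set.mem_union, Set.mem_Icc,
      Set.mem_Ico]
    omega
  · intro u hu u' _ h
    exact (List.idxOf_inj (List.mem_rotate.2 hu.1)).1 h

lemma DiCycle.exists_not_adj (hC : DiCycle A C) (hfree : ¬ SubdivB A k 1 1) (hk : 3 ≤ k)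
    (hn : C.length = 2 * k - 1) : ∃ a ∈ C, ∃ b ∈ C, a ≠ b ∧ ¬ (A a b ∨ A b a) := by
  by_contra! hcomp
  have hnd := hC.2.2.1
  have hfwd : ∀ x y (hx : x < C.length) (hy : y < C.length),
      x < y ∧ y - x < k ∨ y < x ∧ C.length - (x - y) < k → A C[x] C[y] := by
    intro x y hx hy hxy
    have hne : C[x] ≠ C[y] := fun h => by have := hnd.getElem_inj_iff.1 h; omega
    refine (hcomp _ (C.getElem_mem _) _ (C.getElem_mem _) hne).resolve_right fun h => ?_
    rcases hxy with ⟨hlt, _⟩ | ⟨hlt, _⟩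
    · have := hC.length_sub_lt_of_arc hfree (by omega) hlt hy h
      omega
    · have := hC.sub_lt_of_arc hfree (by omega) hlt hx h
      omega
  -- `Q = C[g 0], …, C[g (k + 1)]` is the cycle `C[0], C[2], …, C[k-1], C[k+1], C[1], C[k]`,
  -- and `Q[0] → Q[k]` is the arc `C[0] → C[1]`.
  let g : ℕ → ℕ := fun p =>
    if p = 0 then 0 else if p ≤ k - 2 then p + 1 else if p = k - 1 then k + 1
    else if p = k then 1 else k
  have hg : ∀ p, g p < C.length := by intro p; simp only [g]; split_ifs <;> omega
  let Q := (List.range (k + 2)).map fun p => C[g p]'(hg p)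
  have hQ : DiCycle A Q := by
    refine diCycle_iff_chain.2 ⟨by simp [Q], ?_, ?_⟩
    · rw [← Cycle.map_coe, Cycle.chain_map, Cycle.chain_range_succ]
      refine ⟨hfwd _ _ _ _ ?_, fun m hm => hfwd _ _ _ _ ?_⟩ <;> simp only [g] <;> split_ifs <;>
        first | contradiction | omega
    · refine List.nodup_range.map_on fun p hp q hq h => ?_
      have := hnd.getElem_inj_iff.1 h
      simp only [List.mem_range, g] at hp hq this
      split_ifs at this <;> omega
  have := hQ.sub_lt_of_arc hfree (by omega) (i := 0) (j := k) (by omega) (by simp [Q]) ?_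
  · omega
  · have hg0 : g 0 = 0 := rfl
    have hgk : g k = 1 := by simp only [g]; split_ifs <;> omega
    simp only [Q, List.getElem_map, List.getElem_range, hg0, hgk]
    exact hfwd 0 1 (by omega) (by omega) (by omega)

lemma DiCycle.colorable_induce (hC : DiCycle A C) (hfree : ¬ SubdivB A k 1 1) (hk : 3 ≤ k) :
    ((SimpleGraph.fromRel A).induce {v | v ∈ C}).Colorable (2 * k - 2) := by
  classical
  rcases eq_or_ne C.length (2 * k - 1) with hn | hn
  · obtain ⟨a, ha, b, hb, hab, hnadj⟩ := hC.exists_not_adj hfree hk hn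
    have := (List.finite_toSet C).to_subtype
    refine SimpleGraph.colorable_of_card_le_succ_of_not_adj (a := ⟨a, ha⟩) (b := ⟨b, hb⟩) ?_
      (by simpa using hab) (by simpa [SimpleGraph.fromRel_adj, hab] using hnadj)
    rw [Nat.card_coe_set_eq, ← List.coe_toFinset, Set.ncard_coe_finset]
    have := List.toFinset_card_le C
    omega
  · obtain ⟨f, hf_lt, hf_far⟩ := exists_cyclic_coloring hk hn
    refine (SimpleGraph.colorable_iff_exists_bdd_nat_coloring _).2
      ⟨SimpleGraph.Coloring.mk (fun w => f (C.idxOf w.1)) ?_,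
        fun w => hf_lt _ (List.idxOf_lt_length_iff.2 w.2)⟩
    intro w w' hadj
    have hne : C.idxOf w.1 ≠ C.idxOf w'.1 := fun h =>
      hadj.ne (Subtype.ext ((List.idxOf_inj w.2).1 h))
    wlog hlt : C.idxOf w.1 < C.idxOf w'.1 generalizing w w'
    · exact fun h => this hadj.symm hne.symm (by omega) h.symm
    have hj := List.idxOf_lt_length_iff.2 w'.2
    have harc : A C[C.idxOf w.1] C[C.idxOf w'.1] ∨ A C[C.idxOf w'.1] C[C.idxOf w.1] := by
      simp only [SimpleGraph.comap_adj, SimpleGraph.fromRel_adj,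
        Function.Embedding.coe_subtype] at hadj
      simpa only [List.getElem_idxOf] using hadj.2
    have := hC.dist_lt_of_adj hfree (by omega) hlt hj harc
    exact fun h => by have := hf_far _ _ hlt hj h; omega

end Digraph

theorem stmt10_general {V : Type u} (k : ℕ) (hk : 3 ≤ k) (A : V → V → Prop)
    (hfree : ¬ SubdivB A k 1 1)
    (C : List V) (hC : DiCycle A C) :
    (∀ v ∈ C, {u | u ∈ C ∧ u ≠ v ∧ (A u v ∨ A v u)}.ncard ≤ 2 * k - 2) ∧
    ((SimpleGraph.fromRel A).induce {v | v ∈ C}).chromaticNumber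
      ≤ ((2 * k - 2 : ℕ) : ℕ∞) :=
  ⟨fun _ hv => hC.ncard_adj_le hfree (by omega) hv,
    (hC.colorable_induce hfree hk).chromaticNumber_le⟩

/-- In a strong `B(k,1;1)`-subdivision-free digraph (`k ≥ 3`), the subdigraph induced
by a directed cycle of length at least `2k-2` has maximum degree at most `2k-2` in its
underlying graph, and chromatic number at most `2k-2`. -/
theorem stmt10 {V : Type u} [Fintype V] (k : ℕ) (hk : 3 ≤ k) (A : V → V → Prop)
    (hstrong : StrongConn A) (hfree : ¬ SubdivB A k 1 1)
    (C : List V) (hC : DiCycle A C) (hlen : 2 * k - 2 ≤ C.length) :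
    (∀ v ∈ C, {u | u ∈ C ∧ u ≠ v ∧ (A u v ∨ A v u)}.ncard ≤ 2 * k - 2) ∧
    ((SimpleGraph.fromRel A).induce {v | v ∈ C}).chromaticNumber
      ≤ ((2 * k - 2 : ℕ) : ℕ∞) :=
  stmt10_general k hk A hfree C hC
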